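/- Generalised half-strong co-induction: let Φ', Φ : P(X) → P(X) be monotone operators such that Φ'(Φ(Y)) ⊆ Φ(Y) for all Y ⊆ X (Φ' is absorbed by Φ). If Y ⊆ Φ'(Φ(Y) ∪ νΦ), then Y ⊆ νΦ. -/
import Mathlib

/-- Generalised half-strong co-induction: let `Φ', Φ : P(X) → P(X)` be monotone operators
such that `Φ'` is absorbed by `Φ` (i.e. `Φ' (Φ Y) ⊆ Φ Y` for all `Y`), and let `ν` be the
greatest fixed point of `Φ`.  If `Y ⊆ Φ' (Φ Y ∪ ν)`, then `Y ⊆ ν`. -/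
theorem stmt11 {X : Type*} (Φ' Φ : Set X → Set X)
    (hΦ' : Monotone Φ') (hΦ : Monotone Φ)
    (habsorb : ∀ Y : Set X, Φ' (Φ Y) ⊆ Φ Y)
    (ν : Set X) (hfix : Φ ν = ν) (hgreatest : ∀ S : Set X, Φ S = S → S ⊆ ν)
    (Y : Set X) (hY : Y ⊆ Φ' (Φ Y ∪ ν)) : Y ⊆ ν := by
  set f : Set X →o Set X := ⟨Φ, hΦ⟩
  -- ν is the greatest fixed point
  have hν : ν = OrderHom.gfp f := by
    apply le_antisymm
    · exact OrderHom.le_gfp f hfix.ge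
    · exact hgreatest _ (f.map_gfp)
  -- the set Y ∪ ν is a post-fixed point
  have hpost : Y ∪ ν ⊆ Φ (Y ∪ ν) := by
    apply Set.union_subset
    · calc Y ⊆ Φ' (Φ Y ∪ ν) := hY
        _ ⊆ Φ' (Φ (Y ∪ ν)) := by
            apply hΦ'
            apply Set.union_subset
            · exact hΦ Set.subset_union_left
            · calc ν = Φ ν := hfix.symm
                _ ⊆ Φ (Y ∪ ν) := hΦ Set.subset_union_right
        _ ⊆ Φ (Y ∪ ν) := habsorb _
    · calc ν = Φ ν := hfix.symm
        _ ⊆ Φ (Y ∪ ν) := hΦ Set.subset_union_right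
  have : Y ∪ ν ⊆ ν := by
    rw [hν] at hpost ⊢
    exact OrderHom.le_gfp f hpost
  exact Set.subset_union_left.trans this
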